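/- Let R be a finite commutative local ring and A a k×n matrix over R. Then A has a right inverse if and only if the rows of A are linearly independent over R (i.e., A is full row-rank, meaning xA = 0 implies x = 0 for x in R^k). -/
import Mathlib

open Matrix

/-- Over a field, a matrix with linearly independent rows has a right inverse. -/
lemma field_right_inverse {K : Type*} [Field K] {k n : ℕ}
    (M : Matrix (Fin k) (Fin n) K)
    (h : ∀ x : Fin k → K, Matrix.vecMul x M = 0 → x = 0) :
    ∃ B : Matrix (Fin n) (Fin k) K, M * B = 1 := by
  rw [← Matrix.mulVec_surjective_iff_exists_right_inverse]
  have hinj : Function.Injective (Mᵀ.mulVecLin) := by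
    rw [← LinearMap.ker_eq_bot, LinearMap.ker_eq_bot']
    intro x hx
    apply h
    simpa [Matrix.mulVecLin_apply, ← Matrix.mulVec_transpose] using hx
  have hrk : Mᵀ.rank = k := by
    rw [Matrix.rank, LinearMap.finrank_range_of_inj hinj]
    simp
  have hrkM : M.rank = k := by rw [← Matrix.rank_transpose, hrk]
  have hrange : LinearMap.range M.mulVecLin = ⊤ := by
    apply Submodule.eq_top_of_finrank_eq
    rw [← Matrix.rank, hrkM]
    simp
  intro y
  obtain ⟨x, hx⟩ := LinearMap.range_eq_top.mp hrange y
  exact ⟨x, by simpa [Matrix.mulVecLin_apply] using hx⟩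

theorem right_invertible_iff_full_row_rank
    (R : Type*) [CommRing R] [IsLocalRing R] [Fintype R]
    (k n : ℕ) (A : Matrix (Fin k) (Fin n) R) :
    (∃ B : Matrix (Fin n) (Fin k) R, A * B = 1) ↔
      (∀ x : Fin k → R, Matrix.vecMul x A = 0 → x = 0) := by
  constructor
  · rintro ⟨B, hB⟩ x hx
    have h1 : Matrix.vecMul x (A * B) = 0 := by
      rw [← Matrix.vecMul_vecMul, hx]
      simp
    rw [hB] at h1
    simpa using h1
  · intro hinj
    set I := IsLocalRing.maximalIdeal R with hI
    let f : R →+* IsLocalRing.ResidueField R := IsLocalRing.residue R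
    -- the maximal ideal is nilpotent
    have hart : IsArtinianRing R := isArtinian_of_finite
    have hnil : IsNilpotent I := by
      have := IsArtinianRing.isNilpotent_jacobson_bot (R := R)
      rwa [IsLocalRing.jacobson_eq_maximalIdeal ⊥ bot_ne_top] at this
    obtain ⟨t, ht⟩ := hnil
    -- find a minimal power
    have hP : ∃ t, I ^ t = ⊥ := ⟨t, ht⟩
    classical
    set t0 := Nat.find hP with ht0
    have ht0spec : I ^ t0 = ⊥ := Nat.find_spec hP
    have ht0pos : 0 < t0 := by
      rcases Nat.eq_zero_or_pos t0 with h0 | h1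
      · exfalso
        rw [h0, pow_zero, Ideal.one_eq_top] at ht0spec
        exact one_ne_zero ((Submodule.mem_bot R).mp (ht0spec ▸ Submodule.mem_top (x := (1:R))))
      · exact h1
    have hprev : I ^ (t0 - 1) ≠ ⊥ := Nat.find_min hP (by omega)
    obtain ⟨s, hsmem, hs0⟩ := Submodule.exists_mem_ne_zero_of_ne_bot hprev
    -- rows of A mod the maximal ideal are independent
    have hK : ∀ y : Fin k → IsLocalRing.ResidueField R,
        Matrix.vecMul y (A.map f) = 0 → y = 0 := by
      intro y hy
      by_contra hy0
      obtain ⟨i0, hi0⟩ := Function.ne_iff.mp hy0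
      choose x hx using fun i => Ideal.Quotient.mk_surjective (I := I) (y i)
      have hmem : ∀ j, Matrix.vecMul x A j ∈ I := by
        intro j
        have h1 : f (Matrix.vecMul x A j) = Matrix.vecMul (f ∘ x) (A.map f) j :=
          RingHom.map_vecMul f A x j
        have h2 : (f ∘ x) = y := funext fun i => hx i
        rw [h2, hy] at h1
        exact Ideal.Quotient.eq_zero_iff_mem.mp h1
      have hker : Matrix.vecMul (s • x) A = 0 := by
        funext j
        rw [Matrix.smul_vecMul]
        show s • Matrix.vecMul x A j = 0
        have : s * Matrix.vecMul x A j ∈ I ^ t0 := by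
          have : s * Matrix.vecMul x A j ∈ I ^ (t0 - 1) * I ^ 1 :=
            Ideal.mul_mem_mul hsmem (by simpa using hmem j)
          rwa [← pow_add, Nat.sub_add_cancel ht0pos] at this
        rw [ht0spec] at this
        simpa using this
      have hx0 : s • x = 0 := hinj _ hker
      -- x i0 is a unit
      have hunit : IsUnit (x i0) := by
        rw [← IsLocalRing.notMem_maximalIdeal]
        intro hmem'
        apply hi0
        rw [← hx i0]
        exact Ideal.Quotient.eq_zero_iff_mem.mpr hmem'
      have hsx : s * x i0 = 0 := congrFun hx0 i0
      refine hs0 (hunit.mul_left_cancel ?_)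
      rw [mul_zero, mul_comm]
      exact hsx
    -- get a right inverse over the residue field and lift it
    obtain ⟨Bb, hBb⟩ := field_right_inverse (A.map f) hK
    choose B hB using fun (p : Fin n) (q : Fin k) =>
      Ideal.Quotient.mk_surjective (I := I) (Bb p q)
    set B0 : Matrix (Fin n) (Fin k) R := fun p q => B p q
    have hmap : (A * B0).map f = 1 := by
      have : B0.map f = Bb := by
        funext p q
        exact hB p q
      rw [Matrix.map_mul, this, hBb]
    -- A * B0 is invertible since its determinant is a unit
    have hd1 : f (A * B0).det = 1 := by
      have hmd := RingHom.map_det f (A * B0)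
      rw [hmd]
      show ((A * B0).map ⇑f).det = 1
      rw [hmap]
      simp
    have hdet : IsUnit (A * B0).det := by
      apply (IsLocalRing.residue_ne_zero_iff_isUnit _).mp
      show f (A * B0).det ≠ 0
      rw [hd1]
      exact one_ne_zero
    have hABunit : IsUnit (A * B0) := (Matrix.isUnit_iff_isUnit_det _).mpr hdet
    obtain ⟨u, hu⟩ := hABunit
    refine ⟨B0 * (↑u⁻¹ : Matrix (Fin k) (Fin k) R), ?_⟩
    rw [← Matrix.mul_assoc, ← hu]
    exact u.mul_inv
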